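/- arXiv:1711.07636 — 7 statements merged into one kernel-verified Lean document; each statement's English description precedes it below -/
import Mathlib

section
/- A semigroup S has finitely many J-classes if and only if S has finitely many two-sided ideals. -/
/-- Green's relation J: x and y generate the same two-sided ideal. -/
def JRel (S : Type*) [Semigroup S] (x y : S) : Prop :=
  (∃ a b : WithOne S, a * (x : WithOne S) * b = (y : WithOne S)) ∧
  (∃ a b : WithOne S, a * (y : WithOne S) * b = (x : WithOne S))

/-- A two-sided ideal of a semigroup. -/
def IsIdeal (S : Type*) [Semigroup S] (I : Set S) : Prop :=
  I.Nonempty ∧ ∀ a ∈ I, ∀ s : S, s * a ∈ I ∧ a * s ∈ I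

/-!
Every ideal is the union of the J-classes it contains, so with finitely many J-classes there
are finitely many ideals. Conversely, J-classes are the fibres of `x ↦ S¹xS¹`, whose values are
ideals, so finitely many ideals leave room for only finitely many J-classes.
-/

open Set

section

variable (S : Type*) [Semigroup S]

def principalIdeal (x : S) : Set S :=
  {y | ∃ a b : WithOne S, a * x * b = y}

def jClass (x : S) : Set S :=
  {y | JRel S x y}

variable {S}

lemma mem_principalIdeal_self (x : S) : x ∈ principalIdeal S x :=
  ⟨1, 1, by simp⟩

lemma isIdeal_principalIdeal (x : S) : IsIdeal S (principalIdeal S x) := by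
  refine ⟨⟨x, mem_principalIdeal_self x⟩, ?_⟩
  rintro _ ⟨a, b, h⟩ s
  exact ⟨⟨s * a, b, by rw [WithOne.coe_mul, ← h]; simp only [mul_assoc]⟩,
    ⟨a, b * s, by rw [WithOne.coe_mul, ← h]; simp only [mul_assoc]⟩⟩

lemma IsIdeal.mem_of_mul_mul_eq {I : Set S} (hI : IsIdeal S I) {x y : S} (hx : x ∈ I)
    {a b : WithOne S} (h : a * x * b = y) : y ∈ I := by
  cases a <;> cases b <;> simp only [one_mul, mul_one, ← WithOne.coe_mul, WithOne.coe_inj] at h <;>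
    subst h
  · exact hx
  · exact (hI.2 x hx _).2
  · exact (hI.2 x hx _).1
  · exact (hI.2 _ (hI.2 x hx _).1 _).2

lemma IsIdeal.principalIdeal_subset {I : Set S} (hI : IsIdeal S I) {x : S} (hx : x ∈ I) :
    principalIdeal S x ⊆ I :=
  fun _ ⟨_, _, h⟩ => hI.mem_of_mul_mul_eq hx h

lemma jRel_iff_principalIdeal_eq {x y : S} :
    JRel S x y ↔ principalIdeal S x = principalIdeal S y :=
  ⟨fun ⟨hy, hx⟩ => ((isIdeal_principalIdeal y).principalIdeal_subset hx).antisymm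
      ((isIdeal_principalIdeal x).principalIdeal_subset hy),
    fun h => ⟨show y ∈ principalIdeal S x from h ▸ mem_principalIdeal_self y,
      show x ∈ principalIdeal S y from h ▸ mem_principalIdeal_self x⟩⟩

lemma mem_jClass_self (x : S) : x ∈ jClass S x :=
  jRel_iff_principalIdeal_eq.2 rfl

lemma IsIdeal.jClass_subset {I : Set S} (hI : IsIdeal S I) {x : S} (hx : x ∈ I) :
    jClass S x ⊆ I :=
  fun _ hy => hI.principalIdeal_subset hx hy.1

lemma IsIdeal.eq_sUnion_jClasses {I : Set S} (hI : IsIdeal S I) :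
    I = ⋃₀ {C ∈ range (jClass S) | C ⊆ I} := by
  refine subset_antisymm (fun x hx => ?_) (sUnion_subset fun C hC => hC.2)
  exact ⟨jClass S x, ⟨mem_range_self x, hI.jClass_subset hx⟩, mem_jClass_self x⟩

lemma finite_ideals_of_finite_jClasses (h : (range (jClass S)).Finite) :
    {I : Set S | IsIdeal S I}.Finite :=
  (h.finite_subsets.image sUnion).subset fun I hI =>
    ⟨_, fun _ hC => hC.1, ((show IsIdeal S I from hI).eq_sUnion_jClasses).symm⟩

lemma range_jClass_eq_image :
    range (jClass S) = (fun P => {y | P = principalIdeal S y}) '' range (principalIdeal S) := by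
  rw [← range_comp]
  congr 1
  ext x y
  exact jRel_iff_principalIdeal_eq

lemma finite_jClasses_of_finite_ideals (h : {I : Set S | IsIdeal S I}.Finite) :
    (range (jClass S)).Finite := by
  rw [range_jClass_eq_image]
  exact (h.subset (range_subset_iff.2 isIdeal_principalIdeal)).image _

end

/-- A semigroup has finitely many J-classes iff it has finitely many two-sided ideals. -/
theorem stmt_1 (S : Type*) [Semigroup S] :
    (Set.range fun x : S => {y | JRel S x y}).Finite ↔
    {I : Set S | IsIdeal S I}.Finite :=
  ⟨finite_ideals_of_finite_jClasses, finite_jClasses_of_finite_ideals⟩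
end

section
/- A semigroup S has finitely many R-classes if and only if S has finitely many right ideals. -/
/-!
The R-class of `x` is the set of elements generating the same principal right ideal `x S¹`,
so R-classes correspond to principal right ideals, which are right ideals: finitely many right
ideals leave finitely many R-classes. Conversely, every right ideal `I` is the union of the
R-classes of its elements, since the R-class of `x ∈ I` lies in `x S¹ ⊆ I`; so `I` is determined
by a set of R-classes, and finitely many R-classes leave finitely many right ideals.
-/

/-- Green's relation R: x and y generate the same right ideal. -/
def RRel (S : Type*) [Semigroup S] (x y : S) : Prop :=
  (∃ a : WithOne S, (x : WithOne S) * a = (y : WithOne S)) ∧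
  (∃ a : WithOne S, (y : WithOne S) * a = (x : WithOne S))

/-- A right ideal of a semigroup. -/
def IsRightIdeal (S : Type*) [Semigroup S] (I : Set S) : Prop :=
  I.Nonempty ∧ ∀ a ∈ I, ∀ s : S, a * s ∈ I

section PrincipalRightIdeal

variable {S : Type*} [Semigroup S]

def principalRightIdeal (x : S) : Set S :=
  {y | ∃ a : WithOne S, (x : WithOne S) * a = (y : WithOne S)}

lemma mem_principalRightIdeal_self (x : S) : x ∈ principalRightIdeal x :=
  ⟨1, mul_one _⟩

lemma principalRightIdeal_subset_of_mem {x y : S} (h : y ∈ principalRightIdeal x) :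
    principalRightIdeal y ⊆ principalRightIdeal x := by
  obtain ⟨a, ha⟩ := h
  rintro z ⟨b, hb⟩
  exact ⟨a * b, by rw [← mul_assoc, ha, hb]⟩

lemma rRel_iff_principalRightIdeal_eq {x y : S} :
    RRel S x y ↔ principalRightIdeal x = principalRightIdeal y := by
  refine ⟨fun ⟨hxy, hyx⟩ => ?_, fun h => ⟨?_, ?_⟩⟩
  · exact (principalRightIdeal_subset_of_mem hyx).antisymm (principalRightIdeal_subset_of_mem hxy)
  · exact (h ▸ mem_principalRightIdeal_self y : y ∈ principalRightIdeal x)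
  · exact (h ▸ mem_principalRightIdeal_self x : x ∈ principalRightIdeal y)

lemma rRel_refl (x : S) : RRel S x x :=
  rRel_iff_principalRightIdeal_eq.2 rfl

lemma isRightIdeal_principalRightIdeal (x : S) : IsRightIdeal S (principalRightIdeal x) := by
  refine ⟨⟨x, mem_principalRightIdeal_self x⟩, ?_⟩
  rintro y ⟨a, ha⟩ s
  exact ⟨a * s, by rw [← mul_assoc, ha, WithOne.coe_mul]⟩

lemma IsRightIdeal.principalRightIdeal_subset {I : Set S} (hI : IsRightIdeal S I) {x : S}
    (hx : x ∈ I) : principalRightIdeal x ⊆ I := by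
  rintro y ⟨a, ha⟩
  induction a using WithOne.recOneCoe with
  | one => exact WithOne.coe_inj.1 ((mul_one _).symm.trans ha) ▸ hx
  | coe s => exact WithOne.coe_inj.1 ha ▸ hI.2 x hx s

lemma setOf_rRel_eq_preimage (x : S) :
    {y | RRel S x y} = principalRightIdeal ⁻¹' {principalRightIdeal x} := by
  ext y
  exact rRel_iff_principalRightIdeal_eq.trans eq_comm

lemma IsRightIdeal.sUnion_image_setOf_rRel {I : Set S} (hI : IsRightIdeal S I) :
    ⋃₀ ((fun x => {y | RRel S x y}) '' I) = I := by
  refine Set.Subset.antisymm ?_ fun x hx => Set.mem_sUnion_of_mem (rRel_refl x) ⟨x, hx, rfl⟩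
  rintro y ⟨_, ⟨x, hx, rfl⟩, hxy⟩
  exact hI.principalRightIdeal_subset hx (rRel_iff_principalRightIdeal_eq.1 hxy ▸
    mem_principalRightIdeal_self y)

end PrincipalRightIdeal

/-- A semigroup has finitely many R-classes iff it has finitely many right ideals. -/
theorem stmt_2 (S : Type*) [Semigroup S] :
    (Set.range fun x : S => {y | RRel S x y}).Finite ↔
    {I : Set S | IsRightIdeal S I}.Finite := by
  set rClass : S → Set S := fun x => {y | RRel S x y}
  constructor
  · intro hClasses
    have hInj : Set.InjOn (rClass '' ·) {I : Set S | IsRightIdeal S I} := fun I hI J hJ hIJ => by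
      rw [← hI.sUnion_image_setOf_rRel, ← hJ.sUnion_image_setOf_rRel]
      exact congrArg Set.sUnion hIJ
    refine Set.Finite.of_finite_image (hClasses.finite_subsets.subset ?_) hInj
    rintro _ ⟨I, -, rfl⟩
    exact Set.image_subset_range rClass I
  · intro hIdeals
    have hRange : Set.range rClass =
        (fun J => principalRightIdeal ⁻¹' {J}) '' Set.range principalRightIdeal := by
      rw [← Set.range_comp]
      exact congrArg Set.range (funext setOf_rRel_eq_preimage)
    rw [hRange]
    exact (hIdeals.subset (Set.range_subset_iff.2 isRightIdeal_principalRightIdeal)).image _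
end

section
/- Let S be a periodic semigroup. The set Gr S of all group elements of S is a right ideal of S if and only if the identity s^{ω+1} t = (s^{ω+1} t)^{ω+1} holds for all s, t in S, where for each element x, x^ω denotes the (unique) idempotent power of x and x^{ω+1} := x x^ω. -/
/-!
If `e = ω s = s^(n+1)`, then `s e = s^(n+2)` and `(s e)^(n+1) = s^((n+1)(n+2)) = e^(n+2) = e`,
so by uniqueness of idempotent powers `ω (s e) = e` and hence `s e = (s e) ω (s e)`:
every `s^{ω+1}` is a group element. Thus the identity says that `s^{ω+1} t ∈ Gr S` for all
`s, t`, which is the right ideal property applied to the group elements `s^{ω+1}`;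
conversely every group element `s` equals `s^{ω+1}`.
-/

/-- `spow s n = s^(n+1)` in a semigroup. -/
def spow {S : Type*} [Semigroup S] (s : S) : ℕ → S
  | 0 => s
  | n + 1 => spow s n * s

section Spow

variable {S : Type*} [Semigroup S]

lemma mul_spow (s : S) (n : ℕ) : s * spow s n = spow s (n + 1) := by
  induction n with
  | zero => rfl
  | succ n ih =>
    show s * (spow s n * s) = spow s (n + 1) * s
    rw [← mul_assoc, ih]

lemma spow_add (s : S) (m n : ℕ) : spow s (m + n + 1) = spow s m * spow s n := by
  induction n with
  | zero => rfl
  | succ n ih =>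
    show spow s (m + n + 1) * s = spow s m * (spow s n * s)
    rw [ih, mul_assoc]

lemma spow_spow (s : S) (m n : ℕ) : spow (spow s m) n = spow s (m * n + m + n) := by
  induction n with
  | zero => simp [spow]
  | succ n ih =>
    show spow (spow s m) n * spow s m = _
    rw [ih, ← spow_add]
    congr 1
    ring

lemma IsIdempotentElem.spow_eq {e : S} (he : IsIdempotentElem e) (k : ℕ) : spow e k = e := by
  induction k with
  | zero => rfl
  | succ k ih =>
    show spow e k * e = e
    rw [ih, he.eq]

lemma spow_mul_spow_of_isIdempotentElem {s : S} {n : ℕ} (h : IsIdempotentElem (spow s n)) :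
    spow (s * spow s n) n = spow s n := by
  rw [mul_spow, spow_spow, show (n + 1) * n + (n + 1) + n = n * (n + 1) + n + (n + 1) by ring,
    ← spow_spow, h.spow_eq]

end Spow

section Periodic

variable {S : Type*} [Semigroup S] {ω : S → S}
  (hpow : ∀ s : S, ∃ n : ℕ, ω s = spow s n)
  (hidem : ∀ s : S, ω s * ω s = ω s)
  (huniq : ∀ (s : S) (n : ℕ), spow s n * spow s n = spow s n → spow s n = ω s)
include hpow hidem huniq

lemma omega_mul_omega (s : S) : ω (s * ω s) = ω s := by
  obtain ⟨n, hn⟩ := hpow s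
  have hpow_eq : spow (s * ω s) n = ω s := by
    rw [hn]
    exact spow_mul_spow_of_isIdempotentElem (hn ▸ hidem s)
  rw [← huniq _ n (by rw [hpow_eq]; exact hidem s), hpow_eq]

lemma mul_omega_eq_mul_omega_mul_omega (s : S) : s * ω s = s * ω s * ω (s * ω s) := by
  rw [omega_mul_omega hpow hidem huniq, mul_assoc, hidem]

end Periodic

/-- In a periodic semigroup (each element `s` having a unique idempotent power
`ω s`), the set `Gr S = {s | s = s * ω s}` of group elements is a right ideal
iff the identity `s^{ω+1} t = (s^{ω+1} t)^{ω+1}` holds for all `s, t`. -/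
theorem stmt_6 (S : Type*) [Semigroup S] (ω : S → S)
    (hpow : ∀ s : S, ∃ n : ℕ, ω s = spow s n)
    (hidem : ∀ s : S, ω s * ω s = ω s)
    (huniq : ∀ (s : S) (n : ℕ), spow s n * spow s n = spow s n → spow s n = ω s) :
    (∀ s ∈ {s : S | s = s * ω s}, ∀ t : S, s * t ∈ {s : S | s = s * ω s}) ↔
    (∀ s t : S, (s * ω s) * t = ((s * ω s) * t) * ω ((s * ω s) * t)) := by
  constructor
  · intro hideal s t
    exact hideal _ (mul_omega_eq_mul_omega_mul_omega hpow hidem huniq s) t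
  · intro hid s hs t
    have := hid s t
    rwa [← hs] at this
end

section
/- Let S be a periodic semigroup. If neither N_2^1 nor N_2^ℓ is a divisor of S, then Gr S (the union of all subgroups of S) is a right ideal of S. -/
/-- The 3-element semigroup N₂¹ = {e,a,0}: e²=e, ea=ae=a, other products 0. -/
inductive N21 | e | a | z
  deriving DecidableEq

instance : Fintype N21 :=
  ⟨{N21.e, N21.a, N21.z}, fun x => by cases x <;> decide⟩

instance : Mul N21 :=
  ⟨fun x y => match x, y with
    | .e, .e => .e
    | .e, .a => .a
    | .a, .e => .a
    | _, _ => .z⟩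

instance : Semigroup N21 := ⟨by decide⟩

/-- The 3-element semigroup N₂ˡ = {e,a,0}: e²=e, ea=a, other products 0. -/
inductive N2l | e | a | z
  deriving DecidableEq

instance : Fintype N2l :=
  ⟨{N2l.e, N2l.a, N2l.z}, fun x => by cases x <;> decide⟩

instance : Mul N2l :=
  ⟨fun x y => match x, y with
    | .e, .e => .e
    | .e, .a => .a
    | _, _ => .z⟩

instance : Semigroup N2l := ⟨by decide⟩

/-- `D` is a divisor of `S`: a homomorphic image of a subsemigroup of `S`. -/
def IsDivisorOf (D S : Type*) [Semigroup D] [Semigroup S] : Prop :=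
  ∃ (T : Subsemigroup S) (f : T →ₙ* D), Function.Surjective f

/-- `s` lies in the union of all subgroups of `S`. -/
def InGrS (S : Type*) [Semigroup S] (s : S) : Prop :=
  ∃ e t : S, e * e = e ∧ e * s = s ∧ s * e = s ∧ s * t = e ∧ t * s = e ∧
    e * t = t ∧ t * e = t

/-! Write `y = s * x` and let `e` be the identity of the subgroup containing `s`, so that `e` is
idempotent and `e * y = y`. If `y` lies in no subgroup, then `yᵏ ≠ y` for all `k ≥ 2`, since
otherwise `y` generates a cyclic group. In the subsemigroup `T = {e} ∪ {yⁿ, yⁿe | n ≥ 1}` a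
product of two elements other than `e` has the form `yᵏ` or `yᵏe` with `k ≥ 2`, hence is
neither `e` nor `y`. If `ye = y`, then `e` is an identity of `T`, and collapsing `T ∖ {e, y}` to
a zero maps `T` onto `N₂¹`. If `ye ≠ y`, then no `yⁿe` equals `y`, so a product `u * v` with
`u ≠ e` is never `e` or `y`, and the same collapse maps `T` onto `N₂ˡ`. -/

section

variable {S : Type*} [Semigroup S]

theorem spow_mul_spow (s : S) (m n : ℕ) : spow s m * spow s n = spow s (m + n + 1) := by
  induction n with
  | zero => rfl
  | succ n ih => rw [spow, ← mul_assoc, ih]; rfl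

theorem inGrS_of_spow_succ_eq {y : S} {c : ℕ} (h : spow y (c + 1) = y) : InGrS S y := by
  have periodic : ∀ a, spow y (a + (c + 1)) = spow y a := by
    intro a
    induction a with
    | zero => rw [Nat.zero_add]; exact h
    | succ a ih => rw [show a + 1 + (c + 1) = a + (c + 1) + 1 by omega, spow, ih, spow]
  have mul_eq : ∀ a b k, a + b + 1 = k + (c + 1) → spow y a * spow y b = spow y k := by
    intro a b k hk
    rw [spow_mul_spow, hk, periodic]
  -- `y` generates a cyclic group with identity `yᶜ⁺¹` and `y⁻¹ = y²ᶜ⁺¹`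
  exact ⟨spow y c, spow y (2 * c), mul_eq _ _ _ (by omega), mul_eq c 0 0 (by omega),
    mul_eq 0 c 0 (by omega), mul_eq 0 (2 * c) c (by omega), mul_eq (2 * c) 0 c (by omega),
    mul_eq _ _ _ (by omega), mul_eq _ _ _ (by omega)⟩

section IdempotentTimesPowers

variable {e y : S}

theorem idem_mul_spow (hey : e * y = y) (n : ℕ) : e * spow y n = spow y n := by
  induction n with
  | zero => exact hey
  | succ n ih => rw [spow, ← mul_assoc, ih]

theorem spow_mul_idem (hye : y * e = y) (n : ℕ) : spow y n * e = spow y n := by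
  cases n with
  | zero => exact hye
  | succ n => rw [spow, mul_assoc, hye]

theorem mul_idem_eq_of_spow_mul_idem_eq (he : e * e = e) {n : ℕ} (h : spow y n * e = y) :
    y * e = y := by
  rw [← h, mul_assoc, he]

theorem exists_mul_eq_spow_succ (hey : e * y = y) {u v : S}
    (hu : ∃ m, u = spow y m ∨ u = spow y m * e) (hv : ∃ n, v = spow y n ∨ v = spow y n * e) :
    ∃ k, u * v = spow y (k + 1) ∨ u * v = spow y (k + 1) * e := by
  obtain ⟨m, rfl | rfl⟩ := hu <;> obtain ⟨n, rfl | rfl⟩ := hv <;> refine ⟨m + n, ?_⟩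
  · exact .inl (spow_mul_spow y m n)
  · exact .inr (by rw [← mul_assoc, spow_mul_spow])
  · exact .inl (by rw [mul_assoc, idem_mul_spow hey, spow_mul_spow])
  · exact .inr (by rw [mul_assoc, ← mul_assoc e, idem_mul_spow hey, ← mul_assoc, spow_mul_spow])

def idemPowSubsemigroup (e y : S) (he : e * e = e) (hey : e * y = y) : Subsemigroup S where
  carrier := {u | u = e ∨ ∃ n, u = spow y n ∨ u = spow y n * e}
  mul_mem' := by
    rintro u v (rfl | hu) (rfl | hv)
    · exact .inl he
    · obtain ⟨n, rfl | rfl⟩ := hv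
      · exact .inr ⟨n, .inl (idem_mul_spow hey n)⟩
      · exact .inr ⟨n, .inr (by rw [← mul_assoc, idem_mul_spow hey])⟩
    · obtain ⟨m, rfl | rfl⟩ := hu
      · exact .inr ⟨m, .inr rfl⟩
      · exact .inr ⟨m, .inr (by rw [mul_assoc, he])⟩
    · obtain ⟨k, h⟩ := exists_mul_eq_spow_succ hey hu hv
      exact .inr ⟨k + 1, h⟩

variable {he : e * e = e} {hey : e * y = y}

theorem idem_mem_idemPowSubsemigroup : e ∈ idemPowSubsemigroup e y he hey := .inl rfl

theorem mem_idemPowSubsemigroup_self : y ∈ idemPowSubsemigroup e y he hey := .inr ⟨0, .inl rfl⟩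

theorem idem_mul_of_mem_idemPowSubsemigroup {u : S} (hu : u ∈ idemPowSubsemigroup e y he hey) :
    e * u = u := by
  obtain rfl | ⟨n, rfl | rfl⟩ := hu
  · exact he
  · exact idem_mul_spow hey n
  · rw [← mul_assoc, idem_mul_spow hey]

theorem mul_idem_of_mem_idemPowSubsemigroup (hye : y * e = y) {u : S}
    (hu : u ∈ idemPowSubsemigroup e y he hey) : u * e = u := by
  obtain rfl | ⟨n, rfl | rfl⟩ := hu
  · exact he
  · exact spow_mul_idem hye n
  · rw [mul_assoc, he]

end IdempotentTimesPowers

section NotInSubgroup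

variable {e y : S}

theorem spow_ne_idem (hey : e * y = y) (hy : ∀ n, spow y (n + 1) ≠ y) (n : ℕ) :
    spow y n ≠ e := fun h => hy n (by rw [spow, h, hey])

theorem spow_mul_idem_ne_idem (hey : e * y = y) (hy : ∀ n, spow y (n + 1) ≠ y) (n : ℕ) :
    spow y n * e ≠ e := by
  intro h
  have h' := congrArg (· * y) h
  simp only [mul_assoc, hey] at h'
  exact hy n h'

theorem spow_succ_mul_idem_ne (he : e * e = e) (hy : ∀ n, spow y (n + 1) ≠ y) (n : ℕ) :
    spow y (n + 1) * e ≠ y := by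
  intro h
  rw [spow_mul_idem (mul_idem_eq_of_spow_mul_idem_eq he h)] at h
  exact hy n h

theorem spow_mul_idem_ne (he : e * e = e) (hye : y * e ≠ y) (n : ℕ) : spow y n * e ≠ y :=
  fun h => hye (mul_idem_eq_of_spow_mul_idem_eq he h)

theorem mul_ne_of_mem_idemPowSubsemigroup (he : e * e = e) (hey : e * y = y)
    (hy : ∀ n, spow y (n + 1) ≠ y) {u v : S} (hu : u ∈ idemPowSubsemigroup e y he hey)
    (hv : v ∈ idemPowSubsemigroup e y he hey) (hue : u ≠ e) (hve : v ≠ e) :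
    u * v ≠ e ∧ u * v ≠ y := by
  obtain ⟨k, h | h⟩ := exists_mul_eq_spow_succ hey (hu.resolve_left hue) (hv.resolve_left hve) <;>
    rw [h]
  · exact ⟨spow_ne_idem hey hy _, hy k⟩
  · exact ⟨spow_mul_idem_ne_idem hey hy _, spow_succ_mul_idem_ne he hy k⟩

theorem mul_ne_of_mem_idemPowSubsemigroup_of_mul_ne (he : e * e = e) (hey : e * y = y)
    (hy : ∀ n, spow y (n + 1) ≠ y) (hye : y * e ≠ y) {u v : S}
    (hu : u ∈ idemPowSubsemigroup e y he hey) (hv : v ∈ idemPowSubsemigroup e y he hey)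
    (hue : u ≠ e) : u * v ≠ e ∧ u * v ≠ y := by
  by_cases hve : v = e
  · subst hve
    obtain ⟨m, rfl | rfl⟩ := hu.resolve_left hue
    · exact ⟨spow_mul_idem_ne_idem hey hy m, spow_mul_idem_ne he hye m⟩
    · rw [mul_assoc, he]
      exact ⟨spow_mul_idem_ne_idem hey hy m, spow_mul_idem_ne he hye m⟩
  · exact mul_ne_of_mem_idemPowSubsemigroup he hey hy hu hv hue hve

end NotInSubgroup

section Collapse

variable {T : Subsemigroup S} {e y : S}

theorem isDivisorOf_N21 (he : e ∈ T) (hy : y ∈ T) (hye : y ≠ e)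
    (hid : ∀ u ∈ T, e * u = u ∧ u * e = u)
    (hmul : ∀ u ∈ T, ∀ v ∈ T, u ≠ e → v ≠ e → u * v ≠ e ∧ u * v ≠ y) :
    IsDivisorOf N21 S := by
  classical
  let f : T → N21 := fun u => if u.1 = e then .e else if u.1 = y then .a else .z
  refine ⟨T, ⟨f, ?_⟩, ?_⟩
  · rintro ⟨u, hu⟩ ⟨v, hv⟩
    by_cases hue : u = e
    · subst hue
      simp only [MulMemClass.mk_mul_mk, (hid v hv).1, ↓reduceIte, mul_ite, f]
      split_ifs <;> rfl
    by_cases hve : v = e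
    · subst hve
      simp only [MulMemClass.mk_mul_mk, (hid u hu).2, ↓reduceIte, ite_mul, f]
      split_ifs <;> rfl
    simp only [MulMemClass.mk_mul_mk, hmul u hu v hv hue hve, ↓reduceIte, hue, hve, mul_ite,
      ite_mul, f]
    split_ifs <;> rfl
  · rintro (_ | _ | _)
    · exact ⟨⟨e, he⟩, by simp [f]⟩
    · exact ⟨⟨y, hy⟩, by simp [f, hye]⟩
    · exact ⟨⟨y * y, T.mul_mem hy hy⟩, by simp [f, hmul y hy y hy hye hye]⟩

theorem isDivisorOf_N2l (he : e ∈ T) (hy : y ∈ T) (hye : y ≠ e) (hid : ∀ u ∈ T, e * u = u)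
    (hmul : ∀ u ∈ T, ∀ v ∈ T, u ≠ e → u * v ≠ e ∧ u * v ≠ y) :
    IsDivisorOf N2l S := by
  classical
  let f : T → N2l := fun u => if u.1 = e then .e else if u.1 = y then .a else .z
  refine ⟨T, ⟨f, ?_⟩, ?_⟩
  · rintro ⟨u, hu⟩ ⟨v, hv⟩
    by_cases hue : u = e
    · subst hue
      simp only [MulMemClass.mk_mul_mk, hid v hv, ↓reduceIte, mul_ite, f]
      split_ifs <;> rfl
    simp only [MulMemClass.mk_mul_mk, hmul u hu v hv hue, ↓reduceIte, hue, mul_ite, ite_mul, f]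
    split_ifs <;> rfl
  · rintro (_ | _ | _)
    · exact ⟨⟨e, he⟩, by simp [f]⟩
    · exact ⟨⟨y, hy⟩, by simp [f, hye]⟩
    · exact ⟨⟨y * y, T.mul_mem hy hy⟩, by simp [f, hmul y hy y hy hye]⟩

end Collapse

theorem inGrS_of_idem_mul_eq (h1 : ¬ IsDivisorOf N21 S) (h2 : ¬ IsDivisorOf N2l S) {e y : S}
    (he : e * e = e) (hey : e * y = y) : InGrS S y := by
  by_contra hG
  have hy : ∀ n, spow y (n + 1) ≠ y := fun n h => hG (inGrS_of_spow_succ_eq h)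
  have hye : y ≠ e := spow_ne_idem hey hy 0
  by_cases hyey : y * e = y
  · exact h1 (isDivisorOf_N21 idem_mem_idemPowSubsemigroup mem_idemPowSubsemigroup_self hye
      (fun u hu => ⟨idem_mul_of_mem_idemPowSubsemigroup hu,
        mul_idem_of_mem_idemPowSubsemigroup hyey hu⟩)
      (fun u hu v hv => mul_ne_of_mem_idemPowSubsemigroup he hey hy hu hv))
  · exact h2 (isDivisorOf_N2l idem_mem_idemPowSubsemigroup mem_idemPowSubsemigroup_self hye
      (fun u hu => idem_mul_of_mem_idemPowSubsemigroup hu)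
      (fun u hu v hv => mul_ne_of_mem_idemPowSubsemigroup_of_mul_ne he hey hy hyey hu hv))

end

theorem stmt_7_general (S : Type*) [Semigroup S]
    (h1 : ¬ IsDivisorOf N21 S) (h2 : ¬ IsDivisorOf N2l S) :
    ∀ s : S, InGrS S s → ∀ x : S, InGrS S (s * x) := by
  rintro s ⟨e, -, he, hes, -⟩ x
  exact inGrS_of_idem_mul_eq h1 h2 he (by rw [← mul_assoc, hes])

/-- In a periodic semigroup with neither N₂¹ nor N₂ˡ as a divisor, the union
of all subgroups is a right ideal. -/
theorem stmt_7 (S : Type*) [Semigroup S]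
    (hper : ∀ s : S, ∃ m n : ℕ, m < n ∧ spow s m = spow s n)
    (h1 : ¬ IsDivisorOf N21 S) (h2 : ¬ IsDivisorOf N2l S) :
    ∀ s : S, InGrS S s → ∀ x : S, InGrS S (s * x) :=
  stmt_7_general S h1 h2
end

section
/- Let G be a group. Define L♭(G) on the disjoint union of G, a copy {ḡ : g ∈ G} of G, and a zero element 0, with multiplication extending G, g·h̄ = (gh)‾, ḡ·h = ḡ, and all other products (including ḡ·h̄ and any product with 0) equal to 0. Define R♭(G) dually (g·h̃ = h̃, g̃·h = (gh)~, other products 0). Then R♭(G) is a homomorphic image of a subsemigroup of L♭(G) × L♭(G); specifically, T = {(g,g) : g ∈ G} ∪ ({ḡ} × G pairs) ∪ ({0} × G pairs) is a subsemigroup and φ((g,g)) = g, φ((ḡ,h)) = (g^{-1}h)~, φ((0,g)) = 0 is a surjective homomorphism onto R♭(G). -/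
/-- The 'flat' semigroup L♭(G): G ∪ {ḡ : g ∈ G} ∪ {0}, with g·h̄ = (gh)‾,
ḡ·h = ḡ, and all other products (outside G) equal to 0. -/
inductive Flat (G : Type*) | elt (g : G) | bar (g : G) | zero

def Flat.mul {G : Type*} [Semigroup G] : Flat G → Flat G → Flat G
  | .elt g, .elt h => .elt (g * h)
  | .elt g, .bar h => .bar (g * h)
  | .bar g, .elt _ => .bar g
  | _, _ => .zero

instance {G : Type*} [Semigroup G] : Mul (Flat G) := ⟨Flat.mul⟩

instance {G : Type*} [Semigroup G] : Semigroup (Flat G) where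
  mul_assoc a b c := by
    cases a <;> cases b <;> cases c <;>
      first
        | rfl
        | exact congrArg Flat.elt (mul_assoc _ _ _)
        | exact congrArg Flat.bar (mul_assoc _ _ _)

/-- The 'flat' semigroup R♭(G): G ∪ {g̃ : g ∈ G} ∪ {0}, with g·h̃ = h̃,
g̃·h = (gh)~, and all other products (outside G) equal to 0. -/
inductive FlatR (G : Type*) | elt (g : G) | til (g : G) | zero

def FlatR.mul {G : Type*} [Semigroup G] : FlatR G → FlatR G → FlatR G
  | .elt g, .elt h => .elt (g * h)
  | .elt _, .til h => .til h
  | .til g, .elt h => .til (g * h)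
  | _, _ => .zero

instance {G : Type*} [Semigroup G] : Mul (FlatR G) := ⟨FlatR.mul⟩

instance {G : Type*} [Semigroup G] : Semigroup (FlatR G) where
  mul_assoc a b c := by
    cases a <;> cases b <;> cases c <;>
      first
        | rfl
        | exact congrArg FlatR.elt (mul_assoc _ _ _)
        | exact congrArg FlatR.til (mul_assoc _ _ _)

/-- The subsemigroup T of L♭(G) × L♭(G). -/
def Tset (G : Type*) [Group G] : Set (Flat G × Flat G) :=
  {p | (∃ g : G, p = (.elt g, .elt g)) ∨ (∃ g h : G, p = (.bar g, .elt h)) ∨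
    (∃ g : G, p = (.zero, .elt g))}

/-- The map φ : T → R♭(G). -/
def phi15 {G : Type*} [Group G] : Flat G × Flat G → FlatR G
  | (.elt g, _) => .elt g
  | (.bar g, .elt h) => .til (g⁻¹ * h)
  | _ => .zero

/-! T consists of the pairs (x, h) with h ∈ G and x ∈ {h} ∪ Ḡ ∪ {0}, a shape preserved by
multiplication. The map φ keeps the first coordinate, except on (ḡ, h) where it records g⁻¹h;
this quantity is unchanged when both coordinates are translated on the left by a ∈ G, which is
exactly the rule a·h̃ = h̃ of R♭(G). -/

namespace Flat

variable {G : Type*} [Semigroup G]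

@[simp] lemma elt_mul_elt (g h : G) : (elt g : Flat G) * elt h = elt (g * h) := rfl

@[simp] lemma elt_mul_bar (g h : G) : (elt g : Flat G) * bar h = bar (g * h) := rfl

@[simp] lemma bar_mul_elt (g h : G) : (bar g : Flat G) * elt h = bar g := rfl

@[simp] lemma bar_mul_bar (g h : G) : (bar g : Flat G) * bar h = zero := rfl

@[simp] protected lemma zero_mul (x : Flat G) : zero * x = zero := by cases x <;> rfl

@[simp] protected lemma mul_zero (x : Flat G) : x * zero = zero := by cases x <;> rfl

end Flat

namespace FlatR

variable {G : Type*} [Semigroup G]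

@[simp] lemma elt_mul_elt (g h : G) : (elt g : FlatR G) * elt h = elt (g * h) := rfl

@[simp] lemma elt_mul_til (g h : G) : (elt g : FlatR G) * til h = til h := rfl

@[simp] lemma til_mul_elt (g h : G) : (til g : FlatR G) * elt h = til (g * h) := rfl

@[simp] lemma til_mul_til (g h : G) : (til g : FlatR G) * til h = zero := rfl

@[simp] protected lemma zero_mul (x : FlatR G) : zero * x = zero := by cases x <;> rfl

@[simp] protected lemma mul_zero (x : FlatR G) : x * zero = zero := by cases x <;> rfl

end FlatR

section Phi

variable {G : Type*} [Group G]

@[simp] lemma phi15_elt (g : G) (x : Flat G) : phi15 (.elt g, x) = .elt g := rfl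

@[simp] lemma phi15_bar_elt (g h : G) : phi15 ((.bar g, .elt h) : Flat G × Flat G) = .til (g⁻¹ * h) :=
  rfl

@[simp] lemma phi15_zero (x : Flat G) : phi15 (.zero, x) = .zero := rfl

end Phi

namespace Tset

variable (G : Type*) [Group G]

lemma diag_mem (g : G) : ((.elt g, .elt g) : Flat G × Flat G) ∈ Tset G := Or.inl ⟨g, rfl⟩

lemma bar_mem (g h : G) : ((.bar g, .elt h) : Flat G × Flat G) ∈ Tset G :=
  Or.inr (Or.inl ⟨g, h, rfl⟩)

lemma zero_mem (g : G) : ((.zero, .elt g) : Flat G × Flat G) ∈ Tset G := Or.inr (Or.inr ⟨g, rfl⟩)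

def subsemigroup : Subsemigroup (Flat G × Flat G) where
  carrier := Tset G
  mul_mem' := by
    rintro _ _ (⟨g, rfl⟩ | ⟨g, h, rfl⟩ | ⟨g, rfl⟩) (⟨a, rfl⟩ | ⟨a, b, rfl⟩ | ⟨a, rfl⟩) <;>
      simp only [Prod.mk_mul_mk, Flat.elt_mul_elt, Flat.elt_mul_bar, Flat.bar_mul_elt,
        Flat.bar_mul_bar, Flat.zero_mul] <;>
      first | exact diag_mem G _ | exact bar_mem G _ _ | exact zero_mem G _

lemma phi15_mul_mem {p q : Flat G × Flat G} (hp : p ∈ Tset G) (hq : q ∈ Tset G) :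
    phi15 (p * q) = phi15 p * phi15 q := by
  rcases hp with ⟨g, rfl⟩ | ⟨g, h, rfl⟩ | ⟨g, rfl⟩ <;>
    rcases hq with ⟨a, rfl⟩ | ⟨a, b, rfl⟩ | ⟨a, rfl⟩ <;>
    simp [mul_assoc]

def phiHom : subsemigroup G →ₙ* FlatR G where
  toFun p := phi15 p.1
  map_mul' p q := phi15_mul_mem G p.2 q.2

lemma phiHom_surjective : Function.Surjective (phiHom G) := by
  rintro (g | g | _)
  · exact ⟨⟨_, diag_mem G g⟩, rfl⟩
  · exact ⟨⟨_, bar_mem G 1 g⟩, by simp [phiHom]⟩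
  · exact ⟨⟨_, zero_mem G 1⟩, rfl⟩

end Tset

/-- R♭(G) is a homomorphic image of the subsemigroup T of L♭(G) × L♭(G). -/
theorem stmt_15 (G : Type*) [Group G] :
    (∀ p ∈ Tset G, ∀ q ∈ Tset G, p * q ∈ Tset G) ∧
    (∀ p ∈ Tset G, ∀ q ∈ Tset G, phi15 (p * q) = phi15 p * phi15 q) ∧
    (∀ r : FlatR G, ∃ p ∈ Tset G, phi15 p = r) := by
  refine ⟨fun p hp q hq => (Tset.subsemigroup G).mul_mem hp hq,
    fun p hp q hq => Tset.phi15_mul_mem G hp hq, fun r => ?_⟩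
  obtain ⟨⟨p, hp⟩, rfl⟩ := Tset.phiHom_surjective G r
  exact ⟨p, hp, rfl⟩
end

section
/- Let G1 and G2 be groups of finite exponent dividing n with n > 1, and let u = v be a semigroup identity in letters x_1,…,x_m that holds in G1 but fails in G2. Then the identity (x_1⋯x_m)^n u = (x_1⋯x_m)^n v holds in the semigroup L♭(G1) but fails in L♭(G2). -/
/-- The word (x₁⋯x_m)ⁿ in the free semigroup on m letters (m > 0, n ≥ 1). -/
noncomputable def prefWord (m n : ℕ) (hm : 0 < m) : FreeSemigroup (Fin m) :=
  ⟨⟨0, hm⟩, (List.finRange m).tail ++ (List.replicate (n - 1) (List.finRange m)).flatten⟩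

namespace Flat

variable {G : Type*} [Semigroup G]

def eltHom : G →ₙ* Flat G := ⟨elt, fun _ _ => rfl⟩

lemma mul_mem_range_elt_iff {a b : Flat G} :
    a * b ∈ Set.range elt ↔ a ∈ Set.range elt ∧ b ∈ Set.range elt := by
  cases a <;> cases b <;> simp [HMul.hMul, Mul.mul, Flat.mul]

lemma mul_eq_zero_of_notMem_range_elt {a b : Flat G}
    (ha : a ∉ Set.range elt) (hb : b ∉ Set.range elt) : a * b = zero := by
  cases a <;> cases b <;> simp_all [HMul.hMul, Mul.mul, Flat.mul]

lemma lift_mem_range_elt_iff {α : Type*} (f : α → Flat G) (w : FreeSemigroup α) :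
    FreeSemigroup.lift f w ∈ Set.range elt ↔ ∀ i ∈ w.head :: w.tail, f i ∈ Set.range elt := by
  induction w with
  | ih1 x => simp
  | ih2 x y _ ih =>
    rw [FreeSemigroup.lift_of_mul, mul_mem_range_elt_iff, ih]
    simp

lemma lift_elt {α : Type*} (g : α → G) (w : FreeSemigroup α) :
    FreeSemigroup.lift (fun i => elt (g i)) w = elt (FreeSemigroup.lift g w) := by
  have hcomp : FreeSemigroup.lift (eltHom ∘ g) = eltHom.comp (FreeSemigroup.lift g) :=
    FreeSemigroup.hom_ext rfl
  exact DFunLike.congr_fun hcomp w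

end Flat

lemma List.finRange_eq_cons_tail {m : ℕ} (hm : 0 < m) :
    List.finRange m = ⟨0, hm⟩ :: (List.finRange m).tail := by
  obtain ⟨m, rfl⟩ : ∃ k, m = k + 1 := ⟨m - 1, by omega⟩
  rw [List.finRange_succ]
  rfl

lemma prefWord_eq_mul {m n : ℕ} (hm : 0 < m) (hn : 1 < n) :
    prefWord m n hm = prefWord m 1 hm * prefWord m (n - 1) hm := by
  obtain ⟨k, rfl⟩ : ∃ k, n = k + 2 := ⟨n - 2, by omega⟩
  refine FreeSemigroup.ext rfl ?_
  simp only [prefWord, FreeSemigroup.tail_mul, List.append_assoc]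
  rw [← List.cons_append, ← List.finRange_eq_cons_tail hm]
  rfl

lemma mem_prefWord {m : ℕ} (hm : 0 < m) (n : ℕ) (i : Fin m) :
    i ∈ (prefWord m n hm).head :: (prefWord m n hm).tail := by
  show i ∈ ⟨0, hm⟩ :: ((List.finRange m).tail ++ _)
  rw [← List.cons_append, ← List.finRange_eq_cons_tail hm]
  exact List.mem_append_left _ (List.mem_finRange i)

lemma lift_prefWord_mul_eq_zero {G : Type*} [Semigroup G] {m n : ℕ} (hm : 0 < m) (hn : 1 < n)
    {f : Fin m → Flat G} {i : Fin m} (hi : f i ∉ Set.range Flat.elt)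
    (w : FreeSemigroup (Fin m)) :
    FreeSemigroup.lift f (prefWord m n hm * w) = Flat.zero := by
  have hpref (k : ℕ) : FreeSemigroup.lift f (prefWord m k hm) ∉ Set.range Flat.elt :=
    fun h => hi ((Flat.lift_mem_range_elt_iff f _).1 h i (mem_prefWord hm k i))
  rw [prefWord_eq_mul hm hn, mul_assoc, map_mul]
  refine Flat.mul_eq_zero_of_notMem_range_elt (hpref 1) ?_
  rw [map_mul, Flat.mul_mem_range_elt_iff]
  exact fun h => hpref _ h.1

theorem stmt_16_general (m n : ℕ) (hm : 0 < m) (hn : 1 < n)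
    (G1 G2 : Type*) [Group G1] [Group G2]
    (u v : FreeSemigroup (Fin m))
    (hG1 : ∀ f : Fin m → G1, FreeSemigroup.lift f u = FreeSemigroup.lift f v)
    (hG2 : ¬ ∀ f : Fin m → G2, FreeSemigroup.lift f u = FreeSemigroup.lift f v) :
    (∀ f : Fin m → Flat G1,
      FreeSemigroup.lift f (prefWord m n hm * u) =
        FreeSemigroup.lift f (prefWord m n hm * v)) ∧
    ¬ ∀ f : Fin m → Flat G2,
      FreeSemigroup.lift f (prefWord m n hm * u) =
        FreeSemigroup.lift f (prefWord m n hm * v) := by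
  constructor
  · intro f
    by_cases hf : ∀ i, f i ∈ Set.range Flat.elt
    · choose g hg using hf
      obtain rfl : f = fun i => Flat.elt (g i) := funext fun i => (hg i).symm
      rw [Flat.lift_elt, Flat.lift_elt, map_mul, map_mul, hG1 g]
    · push Not at hf
      obtain ⟨i, hi⟩ := hf
      rw [lift_prefWord_mul_eq_zero hm hn hi, lift_prefWord_mul_eq_zero hm hn hi]
  · push Not at hG2
    obtain ⟨g, hg⟩ := hG2
    intro hflat
    have hg' := hflat fun i => Flat.elt (g i)
    rw [Flat.lift_elt, Flat.lift_elt, map_mul, map_mul] at hg'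
    exact hg (mul_left_cancel (Flat.elt.inj hg'))

/-- If the identity u = v (in m letters) holds in G₁ but fails in G₂, both
groups having exponent dividing n > 1, then (x₁⋯x_m)ⁿ u = (x₁⋯x_m)ⁿ v holds
in L♭(G₁) but fails in L♭(G₂). -/
theorem stmt_16 (m n : ℕ) (hm : 0 < m) (hn : 1 < n)
    (G1 G2 : Type*) [Group G1] [Group G2]
    (hexp1 : ∀ g : G1, g ^ n = 1) (hexp2 : ∀ g : G2, g ^ n = 1)
    (u v : FreeSemigroup (Fin m))
    (hG1 : ∀ f : Fin m → G1, FreeSemigroup.lift f u = FreeSemigroup.lift f v)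
    (hG2 : ¬ ∀ f : Fin m → G2, FreeSemigroup.lift f u = FreeSemigroup.lift f v) :
    (∀ f : Fin m → Flat G1,
      FreeSemigroup.lift f (prefWord m n hm * u) =
        FreeSemigroup.lift f (prefWord m n hm * v)) ∧
    ¬ ∀ f : Fin m → Flat G2,
      FreeSemigroup.lift f (prefWord m n hm * u) =
        FreeSemigroup.lift f (prefWord m n hm * v) :=
  stmt_16_general m n hm hn G1 G2 u v hG1 hG2
end

section
/- Let G be a group, H = {h ∈ G : h·z = e·z} the stabilizer-type subgroup arising from a left-zero action: suppose T = G ∪ Gz is a semigroup in which G is a group with identity e, Gz is an ideal of left zeros, and the map g ↦ gz is the action of left multiplication. Then H is a subgroup of G, and for g1, g2 ∈ G one has g1 z = g2 z if and only if g1 H = g2 H; consequently T is isomorphic to L_H(G). -/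
/-!
Since `Gz` is an ideal of left zeros, `g • (g'z) := (gg')z` is an action of `G` on `Gz`, and it is
transitive, so `Gz` is the coset space of the stabiliser `H` of `1z`. The left zeros absorb
everything on the right, which is exactly the multiplication of `L_H(G)`.
-/

/-- The multiplication of the semigroup L_H(G). -/
def LHmul {G : Type*} [Group G] (H : Subgroup G) :
    G ⊕ (G ⧸ H) → G ⊕ (G ⧸ H) → G ⊕ (G ⧸ H)
  | .inl g1, .inl g2 => .inl (g1 * g2)
  | .inl g1, .inr c => .inr (g1 • c)
  | .inr c, _ => .inr c

namespace LeftZeroExtension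

variable {T G : Type*} [Semigroup T] [Group G] (f : G →ₙ* T) (z : T)

theorem map_mul_mul_right (a b : G) : f a * (f b * z) = f (a * b) * z := by
  rw [map_mul, mul_assoc]

theorem map_mul_right_eq_iff (g₁ g₂ : G) :
    f g₁ * z = f g₂ * z ↔ f (g₁⁻¹ * g₂) * z = f 1 * z := by
  constructor
  · intro h
    rw [← map_mul_mul_right, ← h, map_mul_mul_right, inv_mul_cancel]
  · intro h
    simpa only [map_mul_mul_right, mul_inv_cancel_left, mul_one] using
      (congrArg (f g₁ * ·) h).symm

def stabilizer : Subgroup G where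
  carrier := {h | f h * z = f 1 * z}
  one_mem' := rfl
  mul_mem' {a b} ha hb := by
    show f (a * b) * z = f 1 * z
    rw [← map_mul_mul_right, hb, map_mul_mul_right, mul_one, ha]
  inv_mem' {a} ha := by
    show f a⁻¹ * z = f 1 * z
    simpa only [mul_one] using (map_mul_right_eq_iff f z a 1).mp ha

def cosetToLeftZero : G ⧸ stabilizer f z → T :=
  Quotient.lift (fun g => f g * z) fun a b hab =>
    (map_mul_right_eq_iff f z a b).mpr (QuotientGroup.leftRel_apply.mp hab)

theorem cosetToLeftZero_injective : Function.Injective (cosetToLeftZero f z) := by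
  rintro ⟨g₁⟩ ⟨g₂⟩ h
  exact QuotientGroup.eq.mpr ((map_mul_right_eq_iff f z g₁ g₂).mp h)

def ofLH : G ⊕ (G ⧸ stabilizer f z) → T :=
  Sum.elim f (cosetToLeftZero f z)

theorem ofLH_injective (hf : Function.Injective f) (hdisj : ∀ g h : G, f g * z ≠ f h) :
    Function.Injective (ofLH f z) := by
  rintro (g₁ | c₁) (g₂ | c₂) h
  · exact congrArg Sum.inl (hf h)
  · obtain ⟨g₂, rfl⟩ := QuotientGroup.mk_surjective c₂
    exact absurd h.symm (hdisj g₂ g₁)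
  · obtain ⟨g₁, rfl⟩ := QuotientGroup.mk_surjective c₁
    exact absurd h (hdisj g₁ g₂)
  · exact congrArg Sum.inr (cosetToLeftZero_injective f z h)

theorem ofLH_surjective (hcover : ∀ t : T, (∃ g : G, t = f g) ∨ ∃ g : G, t = f g * z) :
    Function.Surjective (ofLH f z) := by
  intro t
  rcases hcover t with ⟨g, rfl⟩ | ⟨g, rfl⟩
  · exact ⟨.inl g, rfl⟩
  · exact ⟨.inr g, rfl⟩

theorem ofLH_LHmul (hlz : ∀ (g : G) (t : T), f g * z * t = f g * z)
    (x y : G ⊕ (G ⧸ stabilizer f z)) :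
    ofLH f z (LHmul (stabilizer f z) x y) = ofLH f z x * ofLH f z y := by
  rcases x with g₁ | c₁
  · rcases y with g₂ | c₂
    · exact map_mul f g₁ g₂
    · obtain ⟨g₂, rfl⟩ := QuotientGroup.mk_surjective c₂
      exact (map_mul_mul_right f z g₁ g₂).symm
  · obtain ⟨g₁, rfl⟩ := QuotientGroup.mk_surjective c₁
    exact (hlz g₁ _).symm

end LeftZeroExtension

open LeftZeroExtension in
/-- Let T be a semigroup which is the disjoint union of (a copy of) a group G
and the ideal Gz of left zeros. Then H = {h | hz = 1z} is a subgroup of G,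
g₁z = g₂z iff g₁H = g₂H, and T is isomorphic to L_H(G). -/
theorem stmt_18 (T : Type*) [Semigroup T] (G : Type*) [Group G]
    (φ : G → T) (hinj : Function.Injective φ)
    (hhom : ∀ a b : G, φ (a * b) = φ a * φ b)
    (z : T)
    (hlz : ∀ (g : G) (t : T), (φ g * z) * t = φ g * z)
    (hcover : ∀ t : T, (∃ g : G, t = φ g) ∨ ∃ g : G, t = φ g * z)
    (hdisj : ∀ g h : G, φ g * z ≠ φ h) :
    ((1 : G) ∈ {h : G | φ h * z = φ 1 * z} ∧
      (∀ a b : G, a ∈ {h : G | φ h * z = φ 1 * z} →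
        b ∈ {h : G | φ h * z = φ 1 * z} → a * b ∈ {h : G | φ h * z = φ 1 * z}) ∧
      (∀ a : G, a ∈ {h : G | φ h * z = φ 1 * z} →
        a⁻¹ ∈ {h : G | φ h * z = φ 1 * z})) ∧
    (∀ g1 g2 : G, φ g1 * z = φ g2 * z ↔
      ∃ h ∈ {h : G | φ h * z = φ 1 * z}, g2 = g1 * h) ∧
    (∀ Hs : Subgroup G, (∀ h : G, h ∈ Hs ↔ φ h * z = φ 1 * z) →
      ∃ ψ : G ⊕ (G ⧸ Hs) → T, Function.Bijective ψ ∧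
        ∀ x y : G ⊕ (G ⧸ Hs), ψ (LHmul Hs x y) = ψ x * ψ y) := by
  let f : G →ₙ* T := ⟨φ, hhom⟩
  refine ⟨⟨(stabilizer f z).one_mem, fun _ _ => (stabilizer f z).mul_mem,
    fun _ => (stabilizer f z).inv_mem⟩, fun g₁ g₂ => ?_, fun Hs hHs => ?_⟩
  · exact (map_mul_right_eq_iff f z g₁ g₂).trans
      ⟨fun h => ⟨_, h, (mul_inv_cancel_left g₁ g₂).symm⟩,
        by rintro ⟨h, hh, rfl⟩; rwa [inv_mul_cancel_left]⟩
  · obtain rfl : Hs = stabilizer f z := SetLike.ext hHs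
    exact ⟨ofLH f z, ⟨ofLH_injective f z hinj hdisj, ofLH_surjective f z hcover⟩,
      ofLH_LHmul f z hlz⟩
end
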